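/- Let T be a rooted phylogenetic X-tree and L a minimal topological lasso for T such that the graph Γ(L) with vertex set X and edge set L is a block graph. Let v be an interior vertex of T with children v_1, …, v_l. Then for every i there exists a unique leaf x_i ∈ L(v_i) such that {x_s, x_t} ∈ L for all distinct s, t ∈ {1,…,l}. -/

import Mathlib

open scoped Classical

/-- A rooted `X`-tree on vertex type `V`: a finite rooted tree encoded by a parent
function, whose leaves (the vertices with no children) are bijectively labelled by `X`. -/
structure XTree (X V : Type) where
  root : V
  parent : V → V
  parent_root : parent root = root
  reaches : ∀ v : V, ∃ n : ℕ, parent^[n] v = root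
  leaf : X → V
  leaf_inj : Function.Injective leaf
  leaf_iff : ∀ v : V, (∀ w : V, parent w = v → w = v) ↔ v ∈ Set.range leaf

namespace XTree

variable {X V : Type}

/-- The children of a vertex. -/
def children (T : XTree X V) (v : V) : Set V := {w | T.parent w = v ∧ w ≠ v}

def IsLeaf (T : XTree X V) (v : V) : Prop := v ∈ Set.range T.leaf

def Interior (T : XTree X V) (v : V) : Prop := ¬ T.IsLeaf v

/-- Phylogenetic: root has at least two children, and no non-root vertex has exactly
one child (no degree-two vertices apart from possibly the root). -/
def IsPhylo (T : XTree X V) : Prop :=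
  2 ≤ (T.children T.root).ncard ∧
    ∀ v : V, v ≠ T.root → T.Interior v → 2 ≤ (T.children v).ncard

/-- `T.Desc v w` : `w` is a descendant of `v` (or equal to `v`). -/
def Desc (T : XTree X V) (v w : V) : Prop := ∃ n : ℕ, T.parent^[n] w = v

/-- The set of leaf labels below a vertex. -/
def leafSet (T : XTree X V) (v : V) : Set X := {x | T.Desc v (T.leaf x)}

/-- `v` is the last common ancestor of the set `S` of vertices. -/
def IsLCA (T : XTree X V) (v : V) (S : Set V) : Prop :=
  (∀ w ∈ S, T.Desc v w) ∧ ∀ u : V, (∀ w ∈ S, T.Desc u w) → T.Desc u v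

/-- Not a star tree: some interior vertex other than the root. -/
def NonDegenerate (T : XTree X V) : Prop := ∃ v : V, T.Interior v ∧ v ≠ T.root

end XTree

/-- A cord: a 2-element subset of `X`. -/
def IsCord {X : Type} (c : Set X) : Prop := ∃ a b : X, a ≠ b ∧ c = {a, b}

/-- The graph `Γ(L)` with vertex set `X` and edge set `L`. -/
def cordGraph {X : Type} (L : Set (Set X)) : SimpleGraph X where
  Adj a b := a ≠ b ∧ ({a, b} : Set X) ∈ L
  symm := by
    constructor
    intro a b h
    exact ⟨Ne.symm h.1, by rw [Set.pair_comm]; exact h.2⟩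
  loopless := by constructor; intro a h; exact h.1 rfl

/-- Topological lasso, via the child-edge graph characterization: for every interior
vertex, any two distinct child subtrees are joined by a cord of `L`. -/
def XTree.IsTopoLasso {X V : Type} (T : XTree X V) (L : Set (Set X)) : Prop :=
  ∀ v c₁ c₂ : V, c₁ ∈ T.children v → c₂ ∈ T.children v → c₁ ≠ c₂ →
    ∃ a b : X, a ∈ T.leafSet c₁ ∧ b ∈ T.leafSet c₂ ∧ ({a, b} : Set X) ∈ L

/-- Set-inclusion minimal topological lasso. -/
def XTree.IsMinTopoLasso {X V : Type} (T : XTree X V) (L : Set (Set X)) : Prop :=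
  T.IsTopoLasso L ∧ ∀ L' ⊆ L, T.IsTopoLasso L' → L' = L

/-- A nonempty vertex set inducing a connected subgraph with no cut vertex. -/
def GoodSet {α : Type} (G : SimpleGraph α) (B : Set α) : Prop :=
  B.Nonempty ∧ (G.induce B).Connected ∧
    ∀ v ∈ B, (B \ {v}).Nonempty → (G.induce (B \ {v})).Connected

/-- A block: a maximal connected induced subgraph without a cut vertex. -/
def IsBlock {α : Type} (G : SimpleGraph α) (B : Set α) : Prop :=
  GoodSet G B ∧ ∀ C : Set α, GoodSet G C → B ⊆ C → B = C

/-- A block graph: every block is a clique. -/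
def IsBlockGraph {α : Type} (G : SimpleGraph α) : Prop :=
  ∀ B : Set α, IsBlock G B → G.IsClique B

/-- A cut vertex: deleting it disconnects the graph. -/
def IsCutVtx {α : Type} (G : SimpleGraph α) (v : α) : Prop :=
  ¬ (G.induce {w | w ≠ v}).Connected

/-- Claw-free: no induced `K_{1,3}`. -/
def ClawFree {α : Type} (G : SimpleGraph α) : Prop :=
  ¬ ∃ v a b c : α, a ≠ b ∧ a ≠ c ∧ b ≠ c ∧
    G.Adj v a ∧ G.Adj v b ∧ G.Adj v c ∧ ¬ G.Adj a b ∧ ¬ G.Adj a c ∧ ¬ G.Adj b c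

/-- The child-edge graph `G(L,v)`: vertices are the children of `v` (equivalently
the child edges of `v`), two of them adjacent if a cord of `L` joins their subtrees. -/
def childGraph {X V : Type} (T : XTree X V) (L : Set (Set X)) (v : V) :
    SimpleGraph {c : V // c ∈ T.children v} where
  Adj c₁ c₂ := c₁ ≠ c₂ ∧ ∃ a b : X,
    a ∈ T.leafSet (c₁ : V) ∧ b ∈ T.leafSet (c₂ : V) ∧ ({a, b} : Set X) ∈ L
  symm := by
    constructor
    rintro c₁ c₂ ⟨h, a, b, ha, hb, hm⟩
    exact ⟨Ne.symm h, b, a, hb, ha, by rw [Set.pair_comm]; exact hm⟩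
  loopless := by constructor; rintro c ⟨h, -⟩; exact h rfl

/-- `cl(T)`: the clusters of non-root interior vertices. -/
def clSet {X V : Type} (T : XTree X V) : Set (Set X) :=
  {A | ∃ v : V, v ≠ T.root ∧ T.Interior v ∧ A = T.leafSet v}

/-- A cluster marker map for `T` and the ordering of `X`:
`f A` is the `σ`-least element of `A` not used as marker of a proper subcluster. -/
def IsClusterMarker {X V : Type} [LinearOrder X] (T : XTree X V) (f : Set X → X) : Prop :=
  ∀ A ∈ clSet T,
    ((∃ B ∈ clSet T, B ⊂ A) →
      IsLeast (A \ {y | ∃ B ∈ clSet T, B ⊂ A ∧ f B = y}) (f A)) ∧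
    ((¬ ∃ B ∈ clSet T, B ⊂ A) → IsLeast A (f A))

/-- The marker of a child `c` of an interior vertex: the label of `c` if `c` is a leaf,
and `f (L(c))` if `c` is interior. -/
def markRel {X V : Type} (T : XTree X V) (f : Set X → X) (c : V) (a : X) : Prop :=
  T.leaf a = c ∨ (T.Interior c ∧ a = f (T.leafSet c))

/-- `L_{(T,f)}(v)`: all cords between markers of distinct children of `v`. -/
def lassoAt {X V : Type} (T : XTree X V) (f : Set X → X) (v : V) : Set (Set X) :=
  {c | ∃ c₁ c₂ : V, c₁ ∈ T.children v ∧ c₂ ∈ T.children v ∧ c₁ ≠ c₂ ∧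
    ∃ a b : X, markRel T f c₁ a ∧ markRel T f c₂ b ∧ c = {a, b}}

/-- `L_{(T,f)}`: the union over all interior vertices of `L_{(T,f)}(v)`. -/
def lassoFull {X V : Type} (T : XTree X V) (f : Set X → X) : Set (Set X) :=
  {c | ∃ v : V, T.Interior v ∧ c ∈ lassoAt T f v}

/-- An equidistant proper edge-weighting of `T`, encoded by the height function
`t v` = distance from `v` to any leaf below it (so all leaves are equidistant
from the root); properness: interior edges have positive weight. -/
def EquidistantProper {X V : Type} (T : XTree X V) (t : V → ℝ) : Prop :=
  (∀ x : X, t (T.leaf x) = 0) ∧ (∀ v : V, t v ≤ t (T.parent v)) ∧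
    ∀ v : V, v ≠ T.root → T.Interior v → t v < t (T.parent v)

/-- Equivalence of two `X`-trees: a root-, parent- and labelling-preserving bijection. -/
def TreeEquiv {X V V' : Type} (T : XTree X V) (T' : XTree X V') : Prop :=
  ∃ φ : V ≃ V', φ T.root = T'.root ∧ (∀ v, φ (T.parent v) = T'.parent (φ v)) ∧
    ∀ x, φ (T.leaf x) = T'.leaf x

/-- `S` is (equivalent to) the restriction `T|_Y`: the clusters of `S` are exactly the
nonempty traces on `Y` of the clusters of `T`. -/
def IsRestriction {X : Type} (Y : Set X) {V W : Type}
    (T : XTree X V) (S : XTree (↥Y) W) : Prop :=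
  ∀ A : Set X, A ⊆ Y →
    ((∃ w : W, A = Subtype.val '' S.leafSet w) ↔ (A.Nonempty ∧ ∃ v : V, A = T.leafSet v ∩ Y))

/-- The restriction `L|_Y` of a set of cords of `X` to cords of `Y`. -/
def restrictLasso {X : Type} (Y : Set X) (L : Set (Set X)) : Set (Set ↥Y) :=
  {c | ∃ a b : ↥Y, a ≠ b ∧ c = {a, b} ∧ ({(a : X), (b : X)} : Set X) ∈ L}

/-!
Minimality of `L` forces exactly one cord between the leaf sets of any two children of `v`:
a cord `{a, b}` only serves the two children of `lca(a, b)` containing `a` and `b`, so a second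
one could be deleted. The cords inside each `L(w)` make it connected in `Γ(L)`. Hence, for a child
`c` and two further children `t, u`, the cords `c–t`, `t–u`, `u–c` and paths inside `L(c)`, `L(t)`,
`L(u)` form a cycle of `Γ(L)`. A cycle lies in a single block, which in a block graph is a clique,
so the cords from `L(c)` to `L(t)` and to `L(u)` must leave `L(c)` at the same leaf `x_c`.
-/

section BlockGraph

variable {α : Type} {G : SimpleGraph α}

namespace SimpleGraph

theorem induce_reachable_of_isChain {S : Set α} :
    ∀ {a : α} {l : List α}, (a :: l).IsChain G.Adj → (hS : ∀ x ∈ a :: l, x ∈ S) →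
      ∀ x (hx : x ∈ a :: l), (G.induce S).Reachable ⟨a, hS a List.mem_cons_self⟩ ⟨x, hS x hx⟩
  | a, [], _, _, x, hx => by
    obtain rfl : x = a := List.mem_singleton.mp hx
    rfl
  | a, b :: l, hl, hS, x, hx => by
    rw [List.isChain_cons_cons] at hl
    rcases List.mem_cons.mp hx with rfl | hx
    · rfl
    have hedge : (G.induce S).Adj ⟨a, hS a List.mem_cons_self⟩
        ⟨b, hS b (List.mem_cons_of_mem a List.mem_cons_self)⟩ := hl.1
    exact hedge.reachable.trans
      (induce_reachable_of_isChain hl.2 (fun y hy => hS y (List.mem_cons_of_mem a hy)) x hx)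

theorem induce_connected_of_isChain {l : List α} (hne : l ≠ []) (hl : l.IsChain G.Adj) :
    (G.induce {x | x ∈ l}).Connected := by
  obtain ⟨a, t, rfl⟩ := List.exists_cons_of_ne_nil hne
  have reach := induce_reachable_of_isChain (S := {x | x ∈ a :: t}) hl (fun _ hx => hx)
  have : Nonempty {x | x ∈ a :: t} := ⟨⟨a, List.mem_cons_self⟩⟩
  exact ⟨fun u w => (reach u.1 u.2).symm.trans (reach w.1 w.2)⟩

theorem goodSet_of_isChain_of_adj_getLast_head {l : List α} (hne : l ≠ []) (hnd : l.Nodup)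
    (hl : l.IsChain G.Adj) (hclose : ∀ x ∈ l.getLast?, ∀ y ∈ l.head?, G.Adj x y) :
    GoodSet G {x | x ∈ l} := by
  refine ⟨?_, induce_connected_of_isChain hne hl, fun v hv hne' => ?_⟩
  · obtain ⟨a, t, rfl⟩ := List.exists_cons_of_ne_nil hne
    exact ⟨a, List.mem_cons_self⟩
  obtain ⟨l₁, l₂, rfl⟩ := List.append_of_mem hv
  have hv_notMem : v ∉ l₁ ++ l₂ := (List.nodup_cons.mp (List.nodup_middle.mp hnd)).1
  -- Removing `v` leaves the path that runs from the successor of `v` around to its predecessor.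
  have hset : {x | x ∈ l₁ ++ v :: l₂} \ {v} = {x | x ∈ l₂ ++ l₁} := by
    ext x
    simp only [Set.mem_sdiff, Set.mem_ofPred_eq, Set.mem_singleton_iff, List.mem_append,
      List.mem_cons]
    constructor
    · rintro ⟨h | rfl | h, hx⟩
      exacts [.inr h, absurd rfl hx, .inl h]
    · rintro (h | h)
      · exact ⟨.inr (.inr h), by rintro rfl; exact hv_notMem (List.mem_append_right _ h)⟩
      · exact ⟨.inl h, by rintro rfl; exact hv_notMem (List.mem_append_left _ h)⟩
  have hsplit := List.isChain_split.mp hl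
  have hpath : (l₂ ++ l₁).IsChain G.Adj := by
    refine List.isChain_append.mpr ⟨hsplit.2.tail, hsplit.1.left_of_append, ?_⟩
    intro x hx y hy
    apply hclose
    · simp [List.getLast?_append, List.getLast?_cons, Option.mem_def.mp hx]
    · simp [List.head?_append, Option.mem_def.mp hy]
  rw [hset] at hne' ⊢
  exact induce_connected_of_isChain (fun h => by simp [h] at hne') hpath

theorem Preconnected.exists_nodup_isChain {S : Set α} (hS : (G.induce S).Preconnected)
    {a b : α} (ha : a ∈ S) (hb : b ∈ S) :
    ∃ l : List α, l.Nodup ∧ l.IsChain G.Adj ∧ l.head? = some a ∧ l.getLast? = some b ∧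
      ∀ x ∈ l, x ∈ S := by
  obtain ⟨p⟩ := hS ⟨a, ha⟩ ⟨b, hb⟩
  refine ⟨p.bypass.support.map Subtype.val,
    p.bypass_isPath.support_nodup.map Subtype.val_injective,
    List.isChain_map_of_isChain Subtype.val (fun _ _ h => h) p.bypass.isChain_adj_support,
    ?_, ?_, fun x hx => ?_⟩
  · rw [List.head?_map, List.head?_eq_some_head p.bypass.support_ne_nil, Walk.head_support]
    rfl
  · rw [List.getLast?_map, List.getLast?_eq_some_getLast p.bypass.support_ne_nil,
      Walk.getLast_support]
    rfl
  obtain ⟨y, -, rfl⟩ := List.mem_map.mp hx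
  exact y.2

end SimpleGraph

open SimpleGraph

theorem IsBlockGraph.isClique_of_goodSet [Finite α] (hG : IsBlockGraph G) {C : Set α}
    (hC : GoodSet G C) : G.IsClique C := by
  obtain ⟨B, hB, hmax⟩ := Set.Finite.exists_maximalFor id
    {B : Set α | GoodSet G B ∧ C ⊆ B} (Set.toFinite _) ⟨C, hC, subset_rfl⟩
  have hblock : IsBlock G B :=
    ⟨hB.1, fun C' hC' hBC' => hBC'.antisymm (hmax ⟨hC', hB.2.trans hBC'⟩ hBC')⟩
  exact (hG B hblock).subset hB.2

/-- The connecting paths inside `A`, `B`, `C` close up to a cycle through `a'` and `b`. -/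
theorem IsBlockGraph.adj_of_induce_preconnected [Finite α] (hG : IsBlockGraph G)
    {A B C : Set α} (hAB : Disjoint A B) (hBC : Disjoint B C) (hCA : Disjoint C A)
    (hA : (G.induce A).Preconnected) (hB : (G.induce B).Preconnected)
    (hC : (G.induce C).Preconnected) {a a' b b' c c' : α} (ha : a ∈ A) (ha' : a' ∈ A)
    (hb : b ∈ B) (hb' : b' ∈ B) (hc : c ∈ C) (hc' : c' ∈ C)
    (hab : G.Adj a b) (hbc : G.Adj b' c) (hca : G.Adj c' a') : G.Adj a' b := by
  obtain ⟨PA, hPA, hPA', hPA_head, hPA_last, hPA_mem⟩ := hA.exists_nodup_isChain ha' ha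
  obtain ⟨PB, hPB, hPB', hPB_head, hPB_last, hPB_mem⟩ := hB.exists_nodup_isChain hb hb'
  obtain ⟨PC, hPC, hPC', hPC_head, hPC_last, hPC_mem⟩ := hC.exists_nodup_isChain hc hc'
  have hcycle : GoodSet G {x | x ∈ PA ++ (PB ++ PC)} := by
    refine goodSet_of_isChain_of_adj_getLast_head (by simp [← List.head?_eq_none_iff, hPA_head])
      ?_ ?_ ?_
    · refine List.nodup_append.mpr ⟨hPA, List.nodup_append.mpr ⟨hPB, hPC, ?_⟩, ?_⟩
      · exact fun x hx y hy => hBC.ne_of_mem (hPB_mem x hx) (hPC_mem y hy)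
      · simp only [List.mem_append]
        rintro x hx y (hy | hy)
        exacts [hAB.ne_of_mem (hPA_mem x hx) (hPB_mem y hy),
          (hCA.ne_of_mem (hPC_mem y hy) (hPA_mem x hx)).symm]
    · refine List.isChain_append.mpr ⟨hPA', List.isChain_append.mpr ⟨hPB', hPC', ?_⟩, ?_⟩
      · simpa [hPB_last, hPC_head] using hbc
      · simpa [hPA_last, hPB_head] using hab
    · simpa [List.getLast?_append, hPC_last, List.head?_append, hPA_head] using hca
  refine hG.isClique_of_goodSet hcycle ?_ ?_ (hAB.ne_of_mem ha' hb)
  · exact List.mem_append_left _ (List.mem_of_head? hPA_head)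
  · exact List.mem_append_right _ (List.mem_append_left _ (List.mem_of_head? hPB_head))

end BlockGraph

namespace XTree

variable {X V : Type} {T : XTree X V} {L : Set (Set X)}

theorem Desc.refl (T : XTree X V) (v : V) : T.Desc v v := ⟨0, rfl⟩

theorem Desc.trans {u v w : V} (huv : T.Desc u v) (hvw : T.Desc v w) : T.Desc u w := by
  obtain ⟨n, hn⟩ := huv
  obtain ⟨m, hm⟩ := hvw
  exact ⟨n + m, by rw [Function.iterate_add_apply, hm, hn]⟩

theorem Desc.antisymm {u v : V} (huv : T.Desc u v) (hvu : T.Desc v u) : u = v := by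
  obtain ⟨n, hn⟩ := huv
  obtain ⟨m, hm⟩ := hvu
  rcases Nat.eq_zero_or_pos (m + n) with h | h
  · obtain rfl : n = 0 := by omega
    exact hn.symm
  -- `v` is a periodic point of `parent`, hence equal to the root it eventually reaches.
  have hper : Function.IsPeriodicPt T.parent (m + n) v := by
    rw [Function.IsPeriodicPt, Function.IsFixedPt, Function.iterate_add_apply, hn, hm]
  obtain ⟨k, hk⟩ := T.reaches v
  have hroot : v = T.root := by
    have hk_le : k ≤ (m + n) * k := Nat.le_mul_of_pos_left k h
    rw [← (hper.mul_const k).eq, ← Nat.sub_add_cancel hk_le, Function.iterate_add_apply, hk,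
      Function.iterate_fixed T.parent_root]
  rw [← hn, hroot, Function.iterate_fixed T.parent_root]

theorem Desc.total {u w x : V} (hux : T.Desc u x) (hwx : T.Desc w x) :
    T.Desc u w ∨ T.Desc w u := by
  obtain ⟨n, hn⟩ := hux
  obtain ⟨m, hm⟩ := hwx
  rcases le_total n m with h | h
  · exact .inr ⟨m - n, by rw [← hn, ← Function.iterate_add_apply, Nat.sub_add_cancel h, hm]⟩
  · exact .inl ⟨n - m, by rw [← hm, ← Function.iterate_add_apply, Nat.sub_add_cancel h, hn]⟩

theorem desc_of_mem_children {v c : V} (hc : c ∈ T.children v) : T.Desc v c :=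
  ⟨1, hc.1⟩

theorem eq_of_mem_children_of_desc_of_desc {v c₁ c₂ w : V} (h₁ : c₁ ∈ T.children v)
    (h₂ : c₂ ∈ T.children v) (hw₁ : T.Desc c₁ w) (hw₂ : T.Desc c₂ w) : c₁ = c₂ := by
  suffices ∀ {c₁ c₂}, c₁ ∈ T.children v → c₂ ∈ T.children v → T.Desc c₁ c₂ → c₁ = c₂ by
    rcases hw₁.total hw₂ with h | h
    exacts [this h₁ h₂ h, (this h₂ h₁ h).symm]
  rintro c₁ c₂ h₁ h₂ ⟨_ | k, hk⟩
  · exact hk.symm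
  · rw [Function.iterate_succ_apply, h₂.1] at hk
    exact absurd ((desc_of_mem_children h₁).antisymm ⟨k, hk⟩).symm h₁.2

theorem exists_mem_children_desc {v w : V} (h : T.Desc v w) (hne : w ≠ v) :
    ∃ c ∈ T.children v, T.Desc c w := by
  obtain ⟨n, hn⟩ := h
  induction n generalizing w with
  | zero => exact absurd hn hne
  | succ k ih =>
    rw [Function.iterate_succ_apply] at hn
    by_cases hpw : T.parent w = v
    · exact ⟨w, ⟨hpw, hne⟩, Desc.refl T w⟩
    · obtain ⟨c, hc, hcw⟩ := ih hpw hn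
      exact ⟨c, hc, hcw.trans ⟨1, rfl⟩⟩

theorem descendants_ssubset {v c : V} (hc : c ∈ T.children v) :
    {u | T.Desc c u} ⊂ {u | T.Desc v u} :=
  ⟨fun _ hu => (desc_of_mem_children hc).trans hu,
    fun h => hc.2 ((desc_of_mem_children hc).antisymm (h (Desc.refl T v))).symm⟩

theorem children_induction [Finite V] (T : XTree X V) {P : V → Prop}
    (h : ∀ w, (∀ c ∈ T.children w, P c) → P w) (w : V) : P w := by
  induction w using (measure fun w => {u | T.Desc w u}.ncard).wf.induction with
  | _ w ih => exact h w fun c hc => ih c (Set.ncard_lt_ncard (descendants_ssubset hc))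

theorem eq_leaf_of_desc {a : X} {w : V} (h : T.Desc (T.leaf a) w) : w = T.leaf a := by
  obtain ⟨n, hn⟩ := h
  induction n generalizing w with
  | zero => exact hn
  | succ k ih =>
    rw [Function.iterate_succ_apply] at hn
    exact (T.leaf_iff _).mpr ⟨a, rfl⟩ w (ih hn)

theorem leafSet_subset_of_mem_children {v c : V} (hc : c ∈ T.children v) :
    T.leafSet c ⊆ T.leafSet v :=
  fun _ hx => (desc_of_mem_children hc).trans hx

theorem disjoint_leafSet_of_mem_children {v c₁ c₂ : V} (h₁ : c₁ ∈ T.children v)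
    (h₂ : c₂ ∈ T.children v) (hne : c₁ ≠ c₂) : Disjoint (T.leafSet c₁) (T.leafSet c₂) :=
  Set.disjoint_left.mpr fun _ hx₁ hx₂ => hne (eq_of_mem_children_of_desc_of_desc h₁ h₂ hx₁ hx₂)

theorem desc_of_mem_leafSet_of_mem_leafSet_children {v c₁ c₂ w : V} (h₁ : c₁ ∈ T.children v)
    (h₂ : c₂ ∈ T.children v) (hne : c₁ ≠ c₂) {a b : X} (ha : a ∈ T.leafSet c₁)
    (hb : b ∈ T.leafSet c₂) (haw : a ∈ T.leafSet w) (hbw : b ∈ T.leafSet w) : T.Desc w v := by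
  rcases Desc.total haw ((desc_of_mem_children h₁).trans ha) with h | h
  · exact h
  by_cases hwv : w = v
  · exact hwv ▸ Desc.refl T w
  obtain ⟨e, he, hew⟩ := exists_mem_children_desc h hwv
  exact absurd ((eq_of_mem_children_of_desc_of_desc he h₁ (hew.trans haw) ha).symm.trans
    (eq_of_mem_children_of_desc_of_desc he h₂ (hew.trans hbw) hb)) hne

theorem eq_of_mem_leafSet_children {v u c₁ c₂ d₁ d₂ : V} (hc₁ : c₁ ∈ T.children v)
    (hc₂ : c₂ ∈ T.children v) (hc : c₁ ≠ c₂) (hd₁ : d₁ ∈ T.children u)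
    (hd₂ : d₂ ∈ T.children u) (hd : d₁ ≠ d₂) {a b : X} (ha : a ∈ T.leafSet c₁)
    (hb : b ∈ T.leafSet c₂) (ha' : a ∈ T.leafSet d₁) (hb' : b ∈ T.leafSet d₂) :
    u = v ∧ d₁ = c₁ ∧ d₂ = c₂ := by
  obtain rfl : u = v := Desc.antisymm
    (desc_of_mem_leafSet_of_mem_leafSet_children hc₁ hc₂ hc ha hb
      (leafSet_subset_of_mem_children hd₁ ha') (leafSet_subset_of_mem_children hd₂ hb'))
    (desc_of_mem_leafSet_of_mem_leafSet_children hd₁ hd₂ hd ha' hb'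
      (leafSet_subset_of_mem_children hc₁ ha) (leafSet_subset_of_mem_children hc₂ hb))
  exact ⟨rfl, eq_of_mem_children_of_desc_of_desc hd₁ hc₁ ha' ha,
    eq_of_mem_children_of_desc_of_desc hd₂ hc₂ hb' hb⟩

theorem IsPhylo.two_le_ncard_children (hT : T.IsPhylo) {v : V} (hv : T.Interior v) :
    2 ≤ (T.children v).ncard := by
  by_cases hroot : v = T.root
  · exact hroot ▸ hT.1
  · exact hT.2 v hroot hv

theorem cordGraph_adj_of_mem_leafSet {v c₁ c₂ : V} (h₁ : c₁ ∈ T.children v)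
    (h₂ : c₂ ∈ T.children v) (hne : c₁ ≠ c₂) {a b : X} (ha : a ∈ T.leafSet c₁)
    (hb : b ∈ T.leafSet c₂) (hab : ({a, b} : Set X) ∈ L) : (cordGraph L).Adj a b :=
  ⟨(disjoint_leafSet_of_mem_children h₁ h₂ hne).ne_of_mem ha hb, hab⟩

theorem IsMinTopoLasso.cord_unique (hmin : T.IsMinTopoLasso L) {v c₁ c₂ : V}
    (h₁ : c₁ ∈ T.children v) (h₂ : c₂ ∈ T.children v) (hne : c₁ ≠ c₂) {a a' b b' : X}
    (ha : a ∈ T.leafSet c₁) (ha' : a' ∈ T.leafSet c₁) (hb : b ∈ T.leafSet c₂)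
    (hb' : b' ∈ T.leafSet c₂) (hab : ({a, b} : Set X) ∈ L) (hab' : ({a', b'} : Set X) ∈ L) :
    a = a' ∧ b = b' := by
  by_contra hcon
  have hdisj := disjoint_leafSet_of_mem_children h₁ h₂ hne
  have hpair : ({a, b} : Set X) ≠ {a', b'} := by
    rw [Ne, Set.pair_eq_pair_iff]
    rintro (h | ⟨rfl, -⟩)
    exacts [hcon h, hdisj.ne_of_mem ha hb' rfl]
  suffices hL : T.IsTopoLasso (L \ {{a', b'}}) by
    have := hab'
    rw [← hmin.2 _ Set.sdiff_subset hL] at this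
    exact this.2 rfl
  intro u d₁ d₂ hd₁ hd₂ hd
  obtain ⟨p, q, hp, hq, hpq⟩ := hmin.1 u d₁ d₂ hd₁ hd₂ hd
  by_cases hpq' : ({p, q} : Set X) = {a', b'}
  · rcases Set.pair_eq_pair_iff.mp hpq' with ⟨rfl, rfl⟩ | ⟨rfl, rfl⟩
    · obtain ⟨rfl, rfl, rfl⟩ := eq_of_mem_leafSet_children h₁ h₂ hne hd₁ hd₂ hd ha' hb' hp hq
      exact ⟨a, b, ha, hb, hab, hpair⟩
    · obtain ⟨rfl, rfl, rfl⟩ := eq_of_mem_leafSet_children h₁ h₂ hne hd₂ hd₁ hd.symm ha' hb' hq hp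
      exact ⟨b, a, hb, ha, Set.pair_comm a b ▸ hab, Set.pair_comm a b ▸ hpair⟩
  · exact ⟨p, q, hp, hq, hpq, hpq'⟩

theorem IsTopoLasso.induce_leafSet_preconnected [Finite V] (hL : T.IsTopoLasso L) (w : V) :
    ((cordGraph L).induce (T.leafSet w)).Preconnected := by
  induction w using T.children_induction with
  | h w ih =>
  have lift : ∀ c (hc : c ∈ T.children w) x y (hx : x ∈ T.leafSet c) (hy : y ∈ T.leafSet c),
      ((cordGraph L).induce (T.leafSet w)).Reachable
        ⟨x, leafSet_subset_of_mem_children hc hx⟩ ⟨y, leafSet_subset_of_mem_children hc hy⟩ :=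
    fun c hc x y hx hy =>
      (ih c hc ⟨x, hx⟩ ⟨y, hy⟩).map
        ((cordGraph L).induceHomOfLE (leafSet_subset_of_mem_children hc)).toHom
  rintro ⟨a, ha⟩ ⟨b, hb⟩
  by_cases hab : a = b
  · subst hab; rfl
  have hwa : T.leaf a ≠ w := fun h => hab (T.leaf_inj (eq_leaf_of_desc (h ▸ hb))).symm
  have hwb : T.leaf b ≠ w := fun h => hab (T.leaf_inj (eq_leaf_of_desc (h ▸ ha)))
  obtain ⟨ca, hca, ha'⟩ := exists_mem_children_desc ha hwa
  obtain ⟨cb, hcb, hb'⟩ := exists_mem_children_desc hb hwb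
  by_cases hc : ca = cb
  · subst hc
    exact lift ca hca a b ha' hb'
  obtain ⟨p, q, hp, hq, hpq⟩ := hL w ca cb hca hcb hc
  have hedge : ((cordGraph L).induce (T.leafSet w)).Adj
      ⟨p, leafSet_subset_of_mem_children hca hp⟩ ⟨q, leafSet_subset_of_mem_children hcb hq⟩ :=
    cordGraph_adj_of_mem_leafSet hca hcb hc hp hq hpq
  exact (lift ca hca a p ha' hp).trans (hedge.reachable.trans (lift cb hcb q b hq hb'))

theorem IsMinTopoLasso.eq_of_mem_leafSet_of_isBlockGraph [Finite X] [Finite V]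
    (hmin : T.IsMinTopoLasso L) (hbg : IsBlockGraph (cordGraph L)) {v c t u : V}
    (hc : c ∈ T.children v) (ht : t ∈ T.children v) (hu : u ∈ T.children v)
    (hct : c ≠ t) (hcu : c ≠ u) {a a' b d : X} (ha : a ∈ T.leafSet c) (ha' : a' ∈ T.leafSet c)
    (hb : b ∈ T.leafSet t) (hd : d ∈ T.leafSet u) (hab : ({a, b} : Set X) ∈ L)
    (had : ({a', d} : Set X) ∈ L) : a = a' := by
  by_cases htu : t = u
  · subst htu
    exact (hmin.cord_unique hc ht hct ha ha' hb hd hab had).1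
  obtain ⟨b', d', hb', hd', hbd⟩ := hmin.1 v t u ht hu htu
  have hadj : (cordGraph L).Adj a' b :=
    hbg.adj_of_induce_preconnected (disjoint_leafSet_of_mem_children hc ht hct)
      (disjoint_leafSet_of_mem_children ht hu htu) (disjoint_leafSet_of_mem_children hu hc hcu.symm)
      (hmin.1.induce_leafSet_preconnected c) (hmin.1.induce_leafSet_preconnected t)
      (hmin.1.induce_leafSet_preconnected u) ha ha' hb hb' hd' hd
      (cordGraph_adj_of_mem_leafSet hc ht hct ha hb hab)
      (cordGraph_adj_of_mem_leafSet ht hu htu hb' hd' hbd)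
      (cordGraph_adj_of_mem_leafSet hc hu hcu ha' hd had).symm
  exact (hmin.cord_unique hc ht hct ha ha' hb hb hab hadj.2).1

end XTree

theorem stmt11_general {X V : Type} [Fintype X] [Fintype V] (T : XTree X V)
    (hph : T.IsPhylo)
    (L : Set (Set X))
    (hmin : T.IsMinTopoLasso L) (hbg : IsBlockGraph (cordGraph L)) :
    ∀ v : V, T.Interior v →
      ∃! g : {c : V // c ∈ T.children v} → X,
        (∀ c : {c : V // c ∈ T.children v}, g c ∈ T.leafSet (c : V)) ∧
        ∀ c c' : {c : V // c ∈ T.children v}, c ≠ c' → ({g c, g c'} : Set X) ∈ L := by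
  intro v hv
  have exists_ne (c : {c : V // c ∈ T.children v}) : ∃ c', c' ≠ c := by
    obtain ⟨c', hc', hne⟩ := Set.exists_ne_of_one_lt_ncard (hph.two_le_ncard_children hv) c.1
    exact ⟨⟨c', hc'⟩, fun h => hne (congrArg Subtype.val h)⟩
  let IsAttachment (c : {c : V // c ∈ T.children v}) (x : X) : Prop :=
    x ∈ T.leafSet c ∧ ∃ c' : {c : V // c ∈ T.children v}, c' ≠ c ∧ ∃ y ∈ T.leafSet c', {x, y} ∈ L
  have exists_attachment (c) : ∃ x, IsAttachment c x := by
    obtain ⟨c', hne⟩ := exists_ne c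
    obtain ⟨x, y, hx, hy, hxy⟩ := hmin.1 v c c' c.2 c'.2 (Subtype.coe_ne_coe.mpr hne.symm)
    exact ⟨x, hx, c', hne, y, hy, hxy⟩
  have attachment_unique {c x x'} : IsAttachment c x → IsAttachment c x' → x = x' := by
    rintro ⟨hx, t, htc, y, hy, hxy⟩ ⟨hx', u, huc, y', hy', hxy'⟩
    exact hmin.eq_of_mem_leafSet_of_isBlockGraph hbg c.2 t.2 u.2
      (Subtype.coe_ne_coe.mpr htc.symm) (Subtype.coe_ne_coe.mpr huc.symm) hx hx' hy hy' hxy hxy'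
  choose g hg using exists_attachment
  refine ⟨g, ⟨fun c => (hg c).1, fun c c' hne => ?_⟩, fun g' ⟨hg'_mem, hg'_cord⟩ => ?_⟩
  · obtain ⟨a, b, ha, hb, hab⟩ := hmin.1 v c c' c.2 c'.2 (Subtype.coe_ne_coe.mpr hne)
    rwa [attachment_unique (hg c) ⟨ha, c', hne.symm, b, hb, hab⟩,
      attachment_unique (hg c') ⟨hb, c, hne, a, ha, Set.pair_comm a b ▸ hab⟩]
  · funext c
    obtain ⟨c', hne⟩ := exists_ne c
    exact (attachment_unique (hg c)
      ⟨hg'_mem c, c', hne, g' c', hg'_mem c', hg'_cord c c' hne.symm⟩).symm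

/-- if `L` is a minimal topological lasso for `T` with `Γ(L)` a block
graph, then for every interior vertex `v` there is a unique choice of one leaf below
each child of `v` such that all pairs of chosen leaves are cords of `L`. -/
theorem stmt11 {X V : Type} [Fintype X] [Fintype V] (T : XTree X V)
    (hph : T.IsPhylo) (hX : 3 ≤ Fintype.card X)
    (L : Set (Set X)) (hc : ∀ c ∈ L, IsCord c) (hcov : ∀ x : X, ∃ c ∈ L, x ∈ c)
    (hmin : T.IsMinTopoLasso L) (hbg : IsBlockGraph (cordGraph L)) :
    ∀ v : V, T.Interior v →
      ∃! g : {c : V // c ∈ T.children v} → X,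
        (∀ c : {c : V // c ∈ T.children v}, g c ∈ T.leafSet (c : V)) ∧
        ∀ c c' : {c : V // c ∈ T.children v}, c ≠ c' → ({g c, g c'} : Set X) ∈ L :=
  stmt11_general T hph L hmin hbg
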